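/- arXiv:2212.07916 — 4 statements merged into one kernel-verified Lean document; each statement's English description precedes it below -/
import Mathlib

section
/- Let Γ be a countable group with commuting conjugates, i.e., for every finitely generated subgroup H ≤ Γ there is f ∈ Γ such that H commutes elementwise with fHf⁻¹. Assume Γ is infinite. Then Γ admits an inner-Følner sequence: a sequence (F_n) of finite nonempty subsets of Γ with |F_n| → ∞ such that for every γ ∈ Γ, |((γ·F_n·γ⁻¹) Δ F_n)|/|F_n| → 0 as n → ∞. -/
open Filter

/-- A countable infinite group with commuting conjugates admits an inner-Følner
sequence. -/
theorem commuting_conjugates_inner_folner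
    (Γ : Type*) [Group Γ] [Countable Γ] [Infinite Γ] [DecidableEq Γ]
    (hcc : ∀ H : Subgroup Γ, H.FG →
      ∃ f : Γ, ∀ x ∈ H, ∀ y ∈ H, Commute x (f * y * f⁻¹)) :
    ∃ F : ℕ → Finset Γ,
      (∀ n, (F n).Nonempty) ∧
      Tendsto (fun n => ((F n).card : ℝ)) atTop atTop ∧
      ∀ γ : Γ,
        Tendsto
          (fun n => ((symmDiff ((F n).image (fun x => γ * x * γ⁻¹)) (F n)).card : ℝ)
            / ((F n).card : ℝ))
          atTop (nhds 0) := by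
  obtain ⟨e⟩ : Nonempty (ℕ ≃ Γ) := nonempty_equiv_of_countable
  have hinj : ∀ a : Γ, Function.Injective (fun x : Γ => a * x * a⁻¹) := by
    intro a x y h
    exact mul_left_cancel (mul_right_cancel h)
  set S : ℕ → Finset Γ := fun n => (Finset.range (n + 1)).image e with hS
  have hScard : ∀ n, (S n).card = n + 1 := by
    intro n
    rw [hS]
    rw [Finset.card_image_of_injective _ e.injective, Finset.card_range]
  have hfg : ∀ n, (Subgroup.closure (↑(S n) : Set Γ)).FG := fun n => ⟨S n, rfl⟩
  choose f hf using fun n => hcc _ (hfg n)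
  refine ⟨fun n => (S n).image (fun x => f n * x * (f n)⁻¹), ?_, ?_, ?_⟩
  · intro n
    refine Finset.Nonempty.image ⟨e 0, ?_⟩ _
    rw [hS]
    exact Finset.mem_image_of_mem e (Finset.mem_range.2 (Nat.succ_pos n))
  · have hcard : ∀ n, (((S n).image (fun x => f n * x * (f n)⁻¹)).card : ℝ) = (n : ℝ) + 1 := by
      intro n
      rw [Finset.card_image_of_injective _ (hinj (f n)), hScard]
      push_cast
      ring
    simp only [hcard]
    exact tendsto_atTop_add_const_right _ 1 tendsto_natCast_atTop_atTop
  · intro γ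
    have key : ∀ᶠ n in atTop,
        (0 : ℝ) =
        (((symmDiff ((((S n).image (fun x => f n * x * (f n)⁻¹))).image (fun x => γ * x * γ⁻¹))
            ((S n).image (fun x => f n * x * (f n)⁻¹))).card : ℝ)
          / (((S n).image (fun x => f n * x * (f n)⁻¹)).card : ℝ)) := by
      filter_upwards [eventually_ge_atTop (e.symm γ)] with n hn
      have hγS : γ ∈ S n := by
        rw [hS]
        exact Finset.mem_image.2 ⟨e.symm γ, Finset.mem_range.2 (Nat.lt_succ_of_le hn),
          e.apply_symm_apply γ⟩
      have hγH : γ ∈ Subgroup.closure (↑(S n) : Set Γ) := Subgroup.subset_closure hγS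
      have hfix : ∀ z ∈ (S n).image (fun x => f n * x * (f n)⁻¹), γ * z * γ⁻¹ = z := by
        intro z hz
        obtain ⟨x, hx, rfl⟩ := Finset.mem_image.1 hz
        have hxH : x ∈ Subgroup.closure (↑(S n) : Set Γ) := Subgroup.subset_closure hx
        have hc := hf n γ hγH x hxH
        rw [hc.eq, mul_inv_cancel_right]
      have himg : (((S n).image (fun x => f n * x * (f n)⁻¹)).image (fun x => γ * x * γ⁻¹))
          = (S n).image (fun x => f n * x * (f n)⁻¹) := by
        rw [Finset.image_congr (fun z hz => hfix z (Finset.mem_coe.1 hz)), Finset.image_id']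
      rw [himg, symmDiff_self]
      simp
    exact tendsto_const_nhds.congr' key
end

section
/- Let G be a finitely generated group and L ≤_q G a q-normal subgroup. Then there exists a cocompact action of G on a connected graph with vertex set G/L (action by left translation on cosets) such that every edge stabiliser is infinite. -/
def conjSet {G : Type*} [Group G] (s : G) (A : Set G) : Set G :=
  (fun x => s * x * s⁻¹) '' A

def IsQNormal {G : Type*} [Group G] (H : Subgroup G) : Prop :=
  ∃ S : Set G, Subgroup.closure S = ⊤ ∧
    ∀ s ∈ S, (conjSet s (H : Set G) ∩ (H : Set G)).Infinite

private lemma exists_finset_subset_closure {G : Type*} [Group G] {S : Set G} {g : G}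
    (hg : g ∈ Subgroup.closure S) : ∃ F : Set G, F.Finite ∧ F ⊆ S ∧ g ∈ Subgroup.closure F := by
  induction hg using Subgroup.closure_induction with
  | mem x hx => exact ⟨{x}, Set.finite_singleton x, Set.singleton_subset_iff.2 hx,
      Subgroup.subset_closure rfl⟩
  | one => exact ⟨∅, Set.finite_empty, Set.empty_subset _, Subgroup.one_mem _⟩
  | mul x y hx hy ihx ihy =>
    obtain ⟨F1, h1f, h1s, h1⟩ := ihx
    obtain ⟨F2, h2f, h2s, h2⟩ := ihy
    exact ⟨F1 ∪ F2, h1f.union h2f, Set.union_subset h1s h2s,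
      Subgroup.mul_mem _ (Subgroup.closure_mono Set.subset_union_left h1)
        (Subgroup.closure_mono Set.subset_union_right h2)⟩
  | inv x hx ihx =>
    obtain ⟨F, hf, hs, h⟩ := ihx
    exact ⟨F, hf, hs, Subgroup.inv_mem _ h⟩

/-- If `L` is q-normal in the finitely generated group `G`, then `G` acts cocompactly
on a connected graph with vertex set `G/L` (by left translation) with all edge
stabilisers infinite. -/
theorem qnormal_blowup_action
    {G : Type*} [Group G] [Group.FG G] (L : Subgroup G) (hq : IsQNormal L) :
    ∃ E : Set (Sym2 (G ⧸ L)),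
      -- the edge set is G-invariant and contains no loops
      (∀ (g : G), ∀ e ∈ E, Sym2.map (fun x => g • x) e ∈ E) ∧
      (∀ e ∈ E, ¬ e.IsDiag) ∧
      -- the graph is connected
      (∀ x y : G ⧸ L, Relation.ReflTransGen (fun a b => s(a, b) ∈ E) x y) ∧
      -- the action is cocompact: finitely many orbits of edges
      (∃ T : Finset (Sym2 (G ⧸ L)), ∀ e ∈ E, ∃ t ∈ T, ∃ g : G,
        Sym2.map (fun x => g • x) t = e) ∧
      -- all edge stabilisers are infinite
      (∀ e ∈ E, {g : G | Sym2.map (fun x => g • x) e = e}.Infinite) := by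
  classical
  obtain ⟨S, hSgen, hSinf⟩ := hq
  obtain ⟨F0, hF0gen, hF0fin⟩ := Group.fg_iff.mp ‹Group.FG G›
  -- extract a finite subset S' of S which generates G
  have hmem : ∀ f : G, ∃ Ff : Set G, Ff.Finite ∧ Ff ⊆ S ∧
      (f ∈ F0 → f ∈ Subgroup.closure Ff) := by
    intro f
    by_cases hf : f ∈ F0
    · obtain ⟨Ff, h1, h2, h3⟩ := exists_finset_subset_closure (S := S) (g := f)
        (by rw [hSgen]; trivial)
      exact ⟨Ff, h1, h2, fun _ => h3⟩
    · exact ⟨∅, Set.finite_empty, Set.empty_subset _, fun h => absurd h hf⟩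
  choose Ff hFffin hFfsub hFfmem using hmem
  set S' : Set G := ⋃ f ∈ F0, Ff f with hS'def
  have hS'fin : S'.Finite := hF0fin.biUnion fun f _ => hFffin f
  have hS'sub : S' ⊆ S := Set.iUnion₂_subset fun f _ => hFfsub f
  have hS'gen : Subgroup.closure S' = ⊤ := by
    rw [eq_top_iff, ← hF0gen]
    exact Subgroup.closure_le _ |>.mpr fun f hf =>
      Subgroup.closure_mono (Set.subset_biUnion_of_mem hf) (hFfmem f hf)
  -- key smul lemma
  have hsm : ∀ (a b : G), a • ((b : G ⧸ L)) = ((a * b : G) : G ⧸ L) := fun a b =>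
    MulAction.Quotient.smul_mk L a b
  -- the edge set
  refine ⟨{e | ∃ g s : G, s ∈ S' ∧ s ∉ L ∧
      e = s(((g : G ⧸ L)), ((g * s : G) : G ⧸ L))}, ?_, ?_, ?_, ?_, ?_⟩
  · -- invariance
    rintro h e ⟨g, s, hsS, hsL, rfl⟩
    refine ⟨h * g, s, hsS, hsL, ?_⟩
    simp only [Sym2.map_pair_eq, hsm, mul_assoc]
  · -- no loops
    rintro e ⟨g, s, hsS, hsL, rfl⟩ hd
    rw [Sym2.mk_isDiag_iff] at hd
    rw [QuotientGroup.eq] at hd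
    simp only [inv_mul_cancel_left] at hd
    exact hsL hd
  · -- connectivity
    set E : Set (Sym2 (G ⧸ L)) := {e | ∃ g s : G, s ∈ S' ∧ s ∉ L ∧
      e = s(((g : G ⧸ L)), ((g * s : G) : G ⧸ L))}
    set r : G ⧸ L → G ⧸ L → Prop := fun a b => s(a, b) ∈ E with hr
    have hrsymm : Symmetric r := by
      intro a b hab
      simpa only [hr, Sym2.eq_swap] using hab
    have hRsymm : Symmetric (Relation.ReflTransGen r) := by
      intro x y h
      induction h with
      | refl => exact Relation.ReflTransGen.refl
      | tail _ hstep ih => exact (Relation.ReflTransGen.single (hrsymm hstep)).trans ih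
    have hequiv : ∀ (a : G) (x y : G ⧸ L), Relation.ReflTransGen r x y →
        Relation.ReflTransGen r (a • x) (a • y) := by
      intro a x y h
      induction h with
      | refl => exact Relation.ReflTransGen.refl
      | tail _ hstep ih =>
        refine ih.tail ?_
        obtain ⟨g, s, hsS, hsL, he⟩ := hstep
        refine ⟨a * g, s, hsS, hsL, ?_⟩
        have : Sym2.map (fun x => a • x) s(_, _) = _ :=
          congrArg (Sym2.map (fun x => a • x)) he
        simpa only [Sym2.map_pair_eq, hsm, mul_assoc] using this
    have hK : ∀ g : G, Relation.ReflTransGen r ((g : G ⧸ L)) ((1 : G) : G ⧸ L) := by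
      intro g
      have hg : g ∈ Subgroup.closure S' := by rw [hS'gen]; trivial
      induction hg using Subgroup.closure_induction with
      | mem s hs =>
        by_cases hsL : s ∈ L
        · have : ((s : G ⧸ L)) = ((1 : G) : G ⧸ L) := by
            rw [QuotientGroup.eq]
            simpa using Subgroup.inv_mem _ hsL
          rw [this]
        · refine Relation.ReflTransGen.single ?_
          refine hrsymm ⟨1, s, hs, hsL, ?_⟩
          rw [one_mul]
      | one => exact Relation.ReflTransGen.refl
      | mul x y hx hy ihx ihy =>
        have h1 := hequiv x _ _ ihy
        rw [hsm, hsm, mul_one] at h1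
        exact h1.trans ihx
      | inv x hx ihx =>
        have h1 := hequiv x⁻¹ _ _ (hRsymm ihx)
        rw [hsm, hsm, mul_one, inv_mul_cancel] at h1
        exact h1
    intro x y
    induction x using QuotientGroup.induction_on with
    | H a =>
    induction y using QuotientGroup.induction_on with
    | H b => exact (hK a).trans (hRsymm (hK b))
  · -- cocompactness
    refine ⟨hS'fin.toFinset.image (fun u : G => s((((1 : G) : G ⧸ L)), (QuotientGroup.mk u : G ⧸ L))), ?_⟩
    rintro e ⟨g, u, hsS, hsL, rfl⟩
    refine ⟨s((((1 : G) : G ⧸ L)), ((u : G ⧸ L))), Finset.mem_image.mpr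
      ⟨u, hS'fin.mem_toFinset.mpr hsS, rfl⟩, g, ?_⟩
    simp only [Sym2.map_pair_eq, hsm, mul_one]
  · -- infinite edge stabilisers
    rintro e ⟨g, s, hsS, hsL, rfl⟩
    have hinf := hSinf s (hS'sub hsS)
    have hinj : Set.InjOn (fun k => g * k * g⁻¹) (conjSet s (L : Set G) ∩ (L : Set G)) := by
      intro a _ b _ hab
      simpa using hab
    refine ((hinf.image hinj)).mono ?_
    rintro _ ⟨k, ⟨⟨l, hlL, hl⟩, hkL⟩, rfl⟩
    have hks : s⁻¹ * k * s ∈ L := by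
      have : s⁻¹ * k * s = l := by
        rw [← hl]; group
      rw [this]; exact hlL
    have h1 : ((g * k * g⁻¹ * g : G) : G ⧸ L) = ((g : G) : G ⧸ L) := by
      rw [QuotientGroup.eq]
      have : (g * k * g⁻¹ * g)⁻¹ * g = k⁻¹ := by group
      rw [this]; exact Subgroup.inv_mem _ hkL
    have h2 : ((g * k * g⁻¹ * (g * s) : G) : G ⧸ L) = ((g * s : G) : G ⧸ L) := by
      rw [QuotientGroup.eq]
      have : (g * k * g⁻¹ * (g * s))⁻¹ * (g * s) = (s⁻¹ * k * s)⁻¹ := by group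
      rw [this]; exact Subgroup.inv_mem _ hks
    show Sym2.map _ _ = _
    simp only [Sym2.map_pair_eq, hsm, h1, h2]
end

section
/- Let L ≤_q G be a q-normal subgroup. Define the graph Ω with vertex set V = {gLg⁻¹ : g ∈ G} and edge set consisting of pairs {g₁Lg₁⁻¹, g₂Lg₂⁻¹} of distinct conjugates whose intersection is infinite. Then Ω is connected. -/
/-- The conjugate subgroup `g L g⁻¹`. -/
def conjSubgroup {G : Type*} [Group G] (g : G) (L : Subgroup G) : Subgroup G :=
  Subgroup.map (MulAut.conj g).toMonoidHom L

/-!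
Conjugation permutes the vertices and preserves edges, so the set of `g` for which `gLg⁻¹`
lies in the component of `L` is a subgroup of `G`. By q-normality each generator `s` of a
suitable generating set lies in it, since `sLs⁻¹` is `L` or adjacent to `L`.
-/

open Pointwise Relation ConjAct

theorem Relation.ReflTransGen.smul_of_closure_eq_top {G α : Type*} [Group G] [MulAction G α]
    {r : α → α → Prop} [Std.Symm r] (hr : ∀ (g : G) {a b}, r a b → r (g • a) (g • b))
    {S : Set G} (hS : Subgroup.closure S = ⊤) {x : α} (hx : ∀ s ∈ S, ReflTransGen r x (s • x))
    (g : G) : ReflTransGen r x (g • x) := by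
  have smul_path (a : G) {b c : α} (h : ReflTransGen r b c) : ReflTransGen r (a • b) (a • c) :=
    h.lift (a • ·) fun _ _ ↦ hr a
  induction hS ▸ Subgroup.mem_top g using Subgroup.closure_induction with
  | mem s hs => exact hx s hs
  | one => rw [one_smul]
  | mul a b _ _ ha hb => exact mul_smul a b x ▸ ha.trans (smul_path a hb)
  | inv a _ ha =>
    have := smul_path a⁻¹ ha
    rw [inv_smul_smul] at this
    exact symm this

theorem Subgroup.closure_image_eq_top_of_surjective {G H : Type*} [Group G] [Group H]
    (f : G →* H) (hf : Function.Surjective f) {S : Set G} (hS : closure S = ⊤) :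
    closure (f '' S) = ⊤ := by
  rw [← MonoidHom.map_closure, hS, map_top_of_surjective f hf]

theorem Subgroup.smul_inter_smul_infinite_iff {α G : Type*} [Group α] [Group G]
    [MulDistribMulAction α G] (a : α) (A B : Subgroup G) :
    (((a • A : Subgroup G) : Set G) ∩ (a • B : Subgroup G)).Infinite ↔
      ((A : Set G) ∩ B).Infinite := by
  rw [coe_pointwise_smul, coe_pointwise_smul, ← Set.smul_set_inter, Set.infinite_smul_set]

section ConjugatesGraph

variable {G : Type*} [Group G]

theorem conjSubgroup_eq_toConjAct_smul (g : G) (L : Subgroup G) :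
    conjSubgroup g L = toConjAct g • L := by
  rw [Subgroup.pointwise_smul_def]
  rfl

theorem conjSet_eq_coe_toConjAct_smul (g : G) (L : Subgroup G) :
    conjSet g L = ((toConjAct g • L : Subgroup G) : Set G) := by
  rw [← conjSubgroup_eq_toConjAct_smul]
  rfl

variable (L : Subgroup G)

def ConjugatesAdj (A B : Subgroup G) : Prop :=
  (∃ g₁ : G, A = toConjAct g₁ • L) ∧ (∃ g₂ : G, B = toConjAct g₂ • L) ∧
    A ≠ B ∧ ((A : Set G) ∩ B).Infinite

instance : Std.Symm (ConjugatesAdj L) :=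
  ⟨fun _ _ ⟨hA, hB, hne, hinf⟩ ↦ ⟨hB, hA, hne.symm, Set.inter_comm _ _ ▸ hinf⟩⟩

theorem ConjugatesAdj.smul (c : ConjAct G) {A B : Subgroup G} :
    ConjugatesAdj L A B → ConjugatesAdj L (c • A) (c • B) := by
  have smul_conj {A : Subgroup G} : (∃ g : G, A = toConjAct g • L) →
      ∃ g : G, c • A = toConjAct g • L := by
    rintro ⟨g, rfl⟩
    exact ⟨ofConjAct c * g, by rw [smul_smul]; rfl⟩
  rintro ⟨hA, hB, hne, hinf⟩
  exact ⟨smul_conj hA, smul_conj hB, (smul_left_cancel_iff c).not.mpr hne,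
    (Subgroup.smul_inter_smul_infinite_iff c A B).mpr hinf⟩

theorem reflTransGen_conjugatesAdj_toConjAct_smul {s : G}
    (hs : (conjSet s (L : Set G) ∩ L).Infinite) :
    ReflTransGen (ConjugatesAdj L) L (toConjAct s • L) := by
  by_cases hsL : toConjAct s • L = L
  · rw [hsL]
  · refine .single ⟨⟨1, by rw [map_one, one_smul]⟩, ⟨s, rfl⟩, Ne.symm hsL, ?_⟩
    rwa [Set.inter_comm, ← conjSet_eq_coe_toConjAct_smul]

end ConjugatesGraph

/-- If `L ≤_q G`, the graph whose vertices are the conjugates of `L`, with an edge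
between two distinct conjugates whenever their intersection is infinite, is
connected. -/
theorem conjugates_graph_connected
    {G : Type*} [Group G] (L : Subgroup G) (hq : IsQNormal L) :
    ∀ g : G,
      Relation.ReflTransGen
        (fun A B : Subgroup G =>
          (∃ g₁ : G, A = conjSubgroup g₁ L) ∧ (∃ g₂ : G, B = conjSubgroup g₂ L) ∧
          A ≠ B ∧ ((A : Set G) ∩ (B : Set G)).Infinite)
        L (conjSubgroup g L) := by
  obtain ⟨S, hS, hSL⟩ := hq
  intro g
  simp only [conjSubgroup_eq_toConjAct_smul]
  refine ReflTransGen.smul_of_closure_eq_top (r := ConjugatesAdj L)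
    (fun c _ _ ↦ ConjugatesAdj.smul L c)
    (Subgroup.closure_image_eq_top_of_surjective toConjAct.toMonoidHom toConjAct.surjective hS)
    ?_ (toConjAct g)
  rintro _ ⟨s, hs, rfl⟩
  exact reflTransGen_conjugatesAdj_toConjAct_smul L (hSL s hs)
end

section
/- Let G be a group with subgroups L ≤ H ≤ G. Suppose H acts by left translation on a connected graph (H/L, E_{H/L}) with all edge stabilisers infinite, and G acts by left translation on a connected graph (G/H, E_{G/H}); for each G-orbit of edges of (G/H, E_{G/H}) pick a representative f = {eH, g(f)H} incident to eH, with g(f) ∈ G chosen so that L ∩ g(f)Lg(f)⁻¹ is infinite. Then the blown-up graph on vertex set G ×_H (H/L) with edge set E = {{[(g,h₁L)],[(g,h₂L)]} : g ∈ G, {h₁L,h₂L} ∈ E_{H/L}} ∪ {{[(g,eL)],[(g·g(f),eL)]} : g ∈ G, f ∈ F} is connected, carries a left-translation G-action, and every edge stabiliser is infinite. -/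
def bpRel {G : Type*} [Group G] (H L : Subgroup G) :
    G × (H ⧸ L.subgroupOf H) → G × (H ⧸ L.subgroupOf H) → Prop :=
  fun p q => ∃ h : H, p.1 = q.1 * h ∧ q.2 = h • p.2

/-- The balanced product `G ×_H (H/L)`. -/
def BalancedProduct {G : Type*} [Group G] (H L : Subgroup G) : Type _ :=
  Quot (bpRel H L)

/-- The left-translation action of `G` on the balanced product. -/
def bpSmul {G : Type*} [Group G] (H L : Subgroup G) (g' : G) :
    BalancedProduct H L → BalancedProduct H L :=
  Quot.map (fun p => (g' * p.1, p.2))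
    (by rintro p q ⟨h, h1, h2⟩; exact ⟨h, by simp only []; rw [h1, mul_assoc], h2⟩)

/-- The edge set of the blown-up graph. -/
def blowupEdges {G : Type*} [Group G] (H L : Subgroup G)
    (EHL : Set (Sym2 (H ⧸ L.subgroupOf H))) (F : Set (Sym2 (G ⧸ H)))
    (gg : Sym2 (G ⧸ H) → G) : Set (Sym2 (BalancedProduct H L)) :=
  {p | (∃ (g : G) (x₁ x₂ : H ⧸ L.subgroupOf H), s(x₁, x₂) ∈ EHL ∧
          p = s(Quot.mk (bpRel H L) (g, x₁), Quot.mk (bpRel H L) (g, x₂))) ∨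
       (∃ (g : G) (f : Sym2 (G ⧸ H)), f ∈ F ∧
          p = s(Quot.mk (bpRel H L) (g, ((1 : H) : H ⧸ L.subgroupOf H)),
                Quot.mk (bpRel H L) (g * gg f, ((1 : H) : H ⧸ L.subgroupOf H))))}

/-!
Each fibre `{[g, x]}` is a copy of the connected graph on `H/L`, so every vertex is joined to
the base point `[g, eL]` of its fibre, and base points over the same coset `gH` are joined inside
that fibre. An edge `g₀ • f` of `G/H` lifts to the edge `[g₀, eL] — [g₀ g(f), eL]`, so
connectivity of `G/H` joins all base points.

Conjugation by `g` carries the `H`-stabiliser of an edge of `H/L` into the `G`-stabiliser of its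
copy in the fibre over `g`, and `g (L ∩ g(f) L g(f)⁻¹) g⁻¹` fixes the lifted edge
`[g, eL] — [g g(f), eL]`; conjugation is injective, so both stabilisers are infinite.
-/

namespace BalancedProduct

variable {G : Type*} [Group G] {H L : Subgroup G}

local notation "⟪" g ", " x "⟫" => Quot.mk (bpRel H L) (g, x)

local notation "eL" => ((1 : H) : H ⧸ L.subgroupOf H)

theorem mk_mul_eq (g : G) (h : H) (x : H ⧸ L.subgroupOf H) : ⟪g * h, x⟫ = ⟪g, h • x⟫ :=
  Quot.sound ⟨h, rfl, rfl⟩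

theorem mk_mul_one_eq (hLH : L ≤ H) (g : G) {l : G} (hl : l ∈ L) : ⟪g * l, eL⟫ = ⟪g, eL⟫ := by
  have hfix : (⟨l, hLH hl⟩ : H) • eL = eL := by
    change ((⟨l, hLH hl⟩ * 1 : H) : H ⧸ L.subgroupOf H) = eL
    rw [mul_one, QuotientGroup.eq]
    simpa [Subgroup.mem_subgroupOf] using hl
  exact (mk_mul_eq g ⟨l, hLH hl⟩ eL).trans (congrArg _ (congrArg _ hfix))

theorem map_bpSmul_mk_mk (g' g₁ g₂ : G) (x₁ x₂ : H ⧸ L.subgroupOf H) :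
    Sym2.map (bpSmul H L g') s(⟪g₁, x₁⟫, ⟪g₂, x₂⟫) =
      s(⟪g' * g₁, x₁⟫, ⟪g' * g₂, x₂⟫) :=
  rfl

section Graph

open Relation

variable {EHL : Set (Sym2 (H ⧸ L.subgroupOf H))} {EGH F : Set (Sym2 (G ⧸ H))}
  {gg : Sym2 (G ⧸ H) → G}

local notation "Adj" => fun u v => s(u, v) ∈ blowupEdges H L EHL F gg

theorem map_bpSmul_mem_blowupEdges (g' : G) {e : Sym2 (BalancedProduct H L)}
    (he : e ∈ blowupEdges H L EHL F gg) :
    Sym2.map (bpSmul H L g') e ∈ blowupEdges H L EHL F gg := by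
  rcases he with ⟨g, x₁, x₂, hx, rfl⟩ | ⟨g, f, hf, rfl⟩
  · exact Or.inl ⟨g' * g, x₁, x₂, hx, rfl⟩
  · exact Or.inr ⟨g' * g, f, hf, by rw [mul_assoc]; rfl⟩

variable (hHconn : ∀ x y : H ⧸ L.subgroupOf H, ReflTransGen (fun a b => s(a, b) ∈ EHL) x y)
include hHconn

theorem reflTransGen_mk_mk (g : G) (x y : H ⧸ L.subgroupOf H) :
    ReflTransGen Adj ⟪g, x⟫ ⟪g, y⟫ :=
  (hHconn x y).lift (fun z => ⟪g, z⟫) fun a b hab => Or.inl ⟨g, a, b, hab, rfl⟩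

theorem reflTransGen_mk_one_of_coe_eq {g g' : G} (hgg' : (g : G ⧸ H) = g') :
    ReflTransGen Adj ⟪g, eL⟫ ⟪g', eL⟫ := by
  obtain ⟨h, rfl⟩ : ∃ h : H, g * h = g' :=
    ⟨⟨g⁻¹ * g', QuotientGroup.eq.mp hgg'⟩, mul_inv_cancel_left g g'⟩
  rw [mk_mul_eq]
  exact reflTransGen_mk_mk hHconn g _ _

variable (hF : ∀ f ∈ F, f = s(((1 : G) : G ⧸ H), ((gg f : G) : G ⧸ H)))
  (horb : ∀ e ∈ EGH, ∃ f ∈ F, ∃ g : G, Sym2.map (fun x => g • x) f = e)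
include hF horb

theorem reflTransGen_mk_one_of_mem {g g' : G} (he : s((g : G ⧸ H), (g' : G ⧸ H)) ∈ EGH) :
    ReflTransGen Adj ⟪g, eL⟫ ⟪g', eL⟫ := by
  obtain ⟨f, hf, g₀, hg₀⟩ := horb _ he
  rw [hF f hf, Sym2.map_mk, MulAction.Quotient.smul_coe, MulAction.Quotient.smul_coe,
    smul_eq_mul, smul_eq_mul, mul_one] at hg₀
  have hjump : s(⟪g₀, eL⟫, ⟪g₀ * gg f, eL⟫) ∈ blowupEdges H L EHL F gg :=
    Or.inr ⟨g₀, f, hf, rfl⟩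
  rcases Sym2.eq_iff.mp hg₀ with ⟨h₁, h₂⟩ | ⟨h₁, h₂⟩
  · exact ((reflTransGen_mk_one_of_coe_eq hHconn h₁.symm).tail hjump).trans
      (reflTransGen_mk_one_of_coe_eq hHconn h₂)
  · exact ((reflTransGen_mk_one_of_coe_eq hHconn h₂.symm).tail (Sym2.eq_swap ▸ hjump)).trans
      (reflTransGen_mk_one_of_coe_eq hHconn h₁)

variable (hGconn : ∀ x y : G ⧸ H, ReflTransGen (fun a b => s(a, b) ∈ EGH) x y)
include hGconn

theorem reflTransGen_mk_one (g g' : G) : ReflTransGen Adj ⟪g, eL⟫ ⟪g', eL⟫ := by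
  have hlift : ReflTransGen Adj ⟪(g : G ⧸ H).out, eL⟫ ⟪(g' : G ⧸ H).out, eL⟫ :=
    ReflTransGen.lift' (fun c : G ⧸ H => ⟪c.out, eL⟫)
      (fun c d hcd => reflTransGen_mk_one_of_mem hHconn hF horb
        (by rwa [QuotientGroup.out_eq', QuotientGroup.out_eq']))
      _ _ (hGconn _ _)
  exact ((reflTransGen_mk_one_of_coe_eq hHconn (QuotientGroup.out_eq' _).symm).trans hlift).trans
    (reflTransGen_mk_one_of_coe_eq hHconn (QuotientGroup.out_eq' _))

theorem reflTransGen_blowupEdges (a b : BalancedProduct H L) : ReflTransGen Adj a b := by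
  induction a using Quot.ind with | _ p =>
  induction b using Quot.ind with | _ q =>
  obtain ⟨g, x⟩ := p
  obtain ⟨g', y⟩ := q
  exact ((reflTransGen_mk_mk hHconn g x eL).trans
    (reflTransGen_mk_one hHconn hF horb hGconn g g')).trans (reflTransGen_mk_mk hHconn g' eL y)

end Graph

theorem infinite_setOf_fixing_fiber_edge (g : G) {x₁ x₂ : H ⧸ L.subgroupOf H}
    (hstab : {h : H | Sym2.map (fun x => h • x) s(x₁, x₂) = s(x₁, x₂)}.Infinite) :
    {g' : G | Sym2.map (bpSmul H L g') s(⟪g, x₁⟫, ⟪g, x₂⟫) = s(⟪g, x₁⟫, ⟪g, x₂⟫)}.Infinite := by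
  refine (hstab.image ((MulAut.conj g).injective.comp Subtype.val_injective).injOn).mono ?_
  rintro - ⟨h, hh, rfl⟩
  change Sym2.map (bpSmul H L (g * h * g⁻¹)) _ = _
  rw [map_bpSmul_mk_mk, inv_mul_cancel_right, mk_mul_eq, mk_mul_eq]
  exact congrArg (Sym2.map fun x => ⟪g, x⟫) hh

theorem infinite_setOf_fixing_jump_edge (hLH : L ≤ H) (g a : G)
    (hinf : ((L : Set G) ∩ ((fun x => a * x * a⁻¹) '' (L : Set G))).Infinite) :
    {g' : G | Sym2.map (bpSmul H L g') s(⟪g, eL⟫, ⟪g * a, eL⟫) =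
      s(⟪g, eL⟫, ⟪g * a, eL⟫)}.Infinite := by
  refine (hinf.image (MulAut.conj g).injective.injOn).mono ?_
  rintro - ⟨-, ⟨hl, l, hl', rfl⟩, rfl⟩
  change Sym2.map (bpSmul H L (g * (a * l * a⁻¹) * g⁻¹)) _ = _
  rw [map_bpSmul_mk_mk, inv_mul_cancel_right, mk_mul_one_eq hLH g hl,
    show g * (a * l * a⁻¹) * g⁻¹ * (g * a) = g * a * l by group, mk_mul_one_eq hLH _ hl']

end BalancedProduct

theorem blowup_graph_general
    {G : Type*} [Group G] (H L : Subgroup G) (hLH : L ≤ H)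
    (EHL : Set (Sym2 (H ⧸ L.subgroupOf H)))
    (hHconn : ∀ x y : H ⧸ L.subgroupOf H,
      Relation.ReflTransGen (fun a b => s(a, b) ∈ EHL) x y)
    (hHstab : ∀ e ∈ EHL, {h : H | Sym2.map (fun x => h • x) e = e}.Infinite)
    (EGH : Set (Sym2 (G ⧸ H)))
    (hGconn : ∀ x y : G ⧸ H,
      Relation.ReflTransGen (fun a b => s(a, b) ∈ EGH) x y)
    (F : Set (Sym2 (G ⧸ H))) (gg : Sym2 (G ⧸ H) → G)
    (hF : ∀ f ∈ F, f = s(((1 : G) : G ⧸ H), ((gg f : G) : G ⧸ H)) ∧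
      ((L : Set G) ∩ ((fun x => gg f * x * (gg f)⁻¹) '' (L : Set G))).Infinite)
    (horb : ∀ e ∈ EGH, ∃ f ∈ F, ∃ g : G, Sym2.map (fun x => g • x) f = e) :
    -- the blown-up graph carries a left-translation `G`-action,
    (∀ (g' : G), ∀ e ∈ blowupEdges H L EHL F gg,
      Sym2.map (bpSmul H L g') e ∈ blowupEdges H L EHL F gg) ∧
    -- is connected,
    (∀ a b : BalancedProduct H L,
      Relation.ReflTransGen (fun u v => s(u, v) ∈ blowupEdges H L EHL F gg) a b) ∧
    -- and every edge stabiliser is infinite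
    (∀ e ∈ blowupEdges H L EHL F gg,
      {g' : G | Sym2.map (bpSmul H L g') e = e}.Infinite) := by
  refine ⟨fun g' _ he => BalancedProduct.map_bpSmul_mem_blowupEdges g' he,
    BalancedProduct.reflTransGen_blowupEdges hHconn (fun f hf => (hF f hf).1) horb hGconn, ?_⟩
  rintro e (⟨g, x₁, x₂, hx, rfl⟩ | ⟨g, f, hf, rfl⟩)
  · exact BalancedProduct.infinite_setOf_fixing_fiber_edge g (hHstab _ hx)
  · exact BalancedProduct.infinite_setOf_fixing_jump_edge hLH g (gg f) (hF f hf).2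

/-- Blowing up a connected `G`-graph on `G/H` by a connected `H`-graph on `H/L` with
infinite edge stabilisers yields a connected `G`-graph on `G ×_H (H/L) ≅ G/L` with
infinite edge stabilisers. -/
theorem blowup_graph
    {G : Type*} [Group G] (H L : Subgroup G) (hLH : L ≤ H)
    (EHL : Set (Sym2 (H ⧸ L.subgroupOf H)))
    (hHinv : ∀ (h : H), ∀ e ∈ EHL, Sym2.map (fun x => h • x) e ∈ EHL)
    (hHconn : ∀ x y : H ⧸ L.subgroupOf H,
      Relation.ReflTransGen (fun a b => s(a, b) ∈ EHL) x y)
    (hHstab : ∀ e ∈ EHL, {h : H | Sym2.map (fun x => h • x) e = e}.Infinite)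
    (EGH : Set (Sym2 (G ⧸ H)))
    (hGinv : ∀ (g : G), ∀ e ∈ EGH, Sym2.map (fun x => g • x) e ∈ EGH)
    (hGconn : ∀ x y : G ⧸ H,
      Relation.ReflTransGen (fun a b => s(a, b) ∈ EGH) x y)
    (F : Set (Sym2 (G ⧸ H))) (hFE : F ⊆ EGH) (gg : Sym2 (G ⧸ H) → G)
    (hF : ∀ f ∈ F, f = s(((1 : G) : G ⧸ H), ((gg f : G) : G ⧸ H)) ∧
      ((L : Set G) ∩ ((fun x => gg f * x * (gg f)⁻¹) '' (L : Set G))).Infinite)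
    (horb : ∀ e ∈ EGH, ∃ f ∈ F, ∃ g : G, Sym2.map (fun x => g • x) f = e) :
    -- the blown-up graph carries a left-translation `G`-action,
    (∀ (g' : G), ∀ e ∈ blowupEdges H L EHL F gg,
      Sym2.map (bpSmul H L g') e ∈ blowupEdges H L EHL F gg) ∧
    -- is connected,
    (∀ a b : BalancedProduct H L,
      Relation.ReflTransGen (fun u v => s(u, v) ∈ blowupEdges H L EHL F gg) a b) ∧
    -- and every edge stabiliser is infinite
    (∀ e ∈ blowupEdges H L EHL F gg,
      {g' : G | Sym2.map (bpSmul H L g') e = e}.Infinite) :=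
  blowup_graph_general H L hLH EHL hHconn hHstab EGH hGconn F gg hF horb
end
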